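/- Let 0 < β < 1 and let e : [0,∞) → ℝ be absolutely continuous with e(0) ∈ [−1,1], satisfying the differential inequality sign(e(t)) · e'(t) ≤ −ρ̄ |e(t)|^β whenever e(t) ≠ 0, for some ρ̄ > 0, and e'(t) such that e stays at 0 once it reaches 0. Then e(t) = 0 for all t ≥ |e(0)|^{1−β} / (ρ̄ (1−β)). -/
import Mathlib

lemma aux_decay (β ρ : ℝ) (hβ0 : 0 < β) (hβ1 : β < 1) (hρ : 0 < ρ)
    (e e' : ℝ → ℝ) (T : ℝ) (hT : 0 ≤ T)
    (hderiv : ∀ t ∈ Set.Icc (0:ℝ) T, HasDerivAt e (e' t) t)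
    (hpos : ∀ t ∈ Set.Icc (0:ℝ) T, 0 < e t)
    (hineq : ∀ t ∈ Set.Icc (0:ℝ) T, e' t ≤ -ρ * (e t) ^ β) :
    (e T) ^ (1 - β) ≤ (e 0) ^ (1 - β) - (1 - β) * ρ * T := by
  set f : ℝ → ℝ := fun t => (e t) ^ (1 - β) + (1 - β) * ρ * t with hf
  have hfd : ∀ t ∈ Set.Icc (0:ℝ) T,
      HasDerivAt f ((e' t) * (1 - β) * (e t) ^ (1 - β - 1) + (1 - β) * ρ) t := by
    intro t ht
    have h2 : HasDerivAt (fun s : ℝ => (1 - β) * ρ * s) ((1 - β) * ρ) t := by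
      simpa using (hasDerivAt_id t).const_mul ((1 - β) * ρ)
    exact ((hderiv t ht).rpow_const (Or.inl (hpos t ht).ne')).add h2
  have hanti : AntitoneOn f (Set.Icc 0 T) := by
    apply antitoneOn_of_hasDerivWithinAt_nonpos (convex_Icc 0 T)
      (fun t ht => (hfd t ht).continuousAt.continuousWithinAt)
      (f' := fun t => (e' t) * (1 - β) * (e t) ^ (1 - β - 1) + (1 - β) * ρ)
    · intro t ht
      have ht' : t ∈ Set.Icc (0:ℝ) T := interior_subset ht
      exact (hfd t ht').hasDerivWithinAt
    · intro t ht
      have ht' : t ∈ Set.Icc (0:ℝ) T := interior_subset ht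
      have hpt := hpos t ht'
      have key : (e' t) * (e t) ^ (1 - β - 1) ≤ -ρ := by
        have h1 : (e' t) * (e t) ^ (1 - β - 1) ≤ (-ρ * (e t) ^ β) * (e t) ^ (1 - β - 1) := by
          apply mul_le_mul_of_nonneg_right (hineq t ht')
          positivity
        have h2 : (e t) ^ β * (e t) ^ (1 - β - 1) = (e t) ^ (β + (1 - β - 1)) :=
          (Real.rpow_add hpt _ _).symm
        calc (e' t) * (e t) ^ (1 - β - 1) ≤ (-ρ * (e t) ^ β) * (e t) ^ (1 - β - 1) := h1
          _ = -ρ * ((e t) ^ β * (e t) ^ (1 - β - 1)) := by ring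
          _ = -ρ * (e t) ^ (β + (1 - β - 1)) := by rw [h2]
          _ = -ρ := by norm_num
      have h1β : (0:ℝ) < 1 - β := by linarith
      nlinarith [key]
  have := hanti (Set.left_mem_Icc.mpr hT) (Set.right_mem_Icc.mpr hT) hT
  simp only [hf] at this
  linarith

theorem stmt_9 (β ρ : ℝ) (hβ : 0 < β ∧ β < 1) (hρ : 0 < ρ)
    (e e' : ℝ → ℝ)
    (hderiv : ∀ t : ℝ, 0 ≤ t → HasDerivAt e (e' t) t)
    (h0 : |e 0| ≤ 1)
    (hineq : ∀ t : ℝ, 0 ≤ t → e t ≠ 0 →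
      Real.sign (e t) * e' t ≤ -ρ * |e t| ^ β)
    (hstay : ∀ t : ℝ, 0 ≤ t → e t = 0 → ∀ s, t ≤ s → e s = 0) :
    ∀ t : ℝ, |e 0| ^ (1 - β) / (ρ * (1 - β)) ≤ t → e t = 0 := by
  obtain ⟨hβ0, hβ1⟩ := hβ
  have h1β : (0:ℝ) < 1 - β := by linarith
  intro t ht
  have hT0 : (0:ℝ) ≤ |e 0| ^ (1 - β) / (ρ * (1 - β)) := by positivity
  have ht0 : (0:ℝ) ≤ t := le_trans hT0 ht
  -- key bound: ρ * (1-β) * t ≥ |e 0|^(1-β)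
  have hbig : |e 0| ^ (1 - β) ≤ ρ * (1 - β) * t := by
    rw [div_le_iff₀ (by positivity)] at ht
    linarith
  by_cases hz : ∃ s ∈ Set.Icc (0:ℝ) t, e s = 0
  · obtain ⟨s, hs, hes⟩ := hz
    exact hstay s hs.1 hes t hs.2
  · exfalso
    push_neg at hz
    have hne : ∀ s ∈ Set.Icc (0:ℝ) t, e s ≠ 0 := hz
    have hcont : ContinuousOn e (Set.Icc 0 t) :=
      fun u hu => (hderiv u hu.1).continuousAt.continuousWithinAt
    have he0 : e 0 ≠ 0 := hne 0 (Set.left_mem_Icc.mpr ht0)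
    rcases he0.lt_or_gt with hneg | hposi
    · -- e 0 < 0 : work with -e
      have hallneg : ∀ s ∈ Set.Icc (0:ℝ) t, e s < 0 := by
        intro s hs
        rcases (hne s hs).lt_or_gt with h | h
        · exact h
        · exfalso
          have hsub : Set.Icc (e 0) (e s) ⊆ e '' Set.Icc 0 s :=
            intermediate_value_Icc hs.1 (hcont.mono (Set.Icc_subset_Icc_right hs.2))
          obtain ⟨u, hu, heu⟩ := hsub ⟨hneg.le, h.le⟩
          exact hne u ⟨hu.1, hu.2.trans hs.2⟩ heu
      have key := aux_decay β ρ hβ0 hβ1 hρ (fun s => -e s) (fun s => -e' s) t ht0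
        (fun s hs => (hderiv s hs.1).neg)
        (fun s hs => by simpa using (hallneg s hs))
        (by
          intro s hs
          have h1 := hineq s hs.1 (hne s hs)
          rw [Real.sign_of_neg (hallneg s hs), abs_of_neg (hallneg s hs)] at h1
          show -e' s ≤ -ρ * (-e s) ^ β
          linarith)
      have key' : (-e t) ^ (1 - β) ≤ (-e 0) ^ (1 - β) - (1 - β) * ρ * t := key
      have habs : |e 0| = -e 0 := abs_of_neg hneg
      have hp : (0:ℝ) < -e t := by simpa using hallneg t (Set.right_mem_Icc.mpr ht0)
      have hpt : (0:ℝ) < (-e t) ^ (1 - β) := Real.rpow_pos_of_pos hp _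
      rw [← habs] at key'
      nlinarith
    · have hallpos : ∀ s ∈ Set.Icc (0:ℝ) t, 0 < e s := by
        intro s hs
        rcases (hne s hs).lt_or_gt with h | h
        · exfalso
          have hsub : Set.Icc (e s) (e 0) ⊆ e '' Set.Icc 0 s :=
            intermediate_value_Icc' hs.1 (hcont.mono (Set.Icc_subset_Icc_right hs.2))
          obtain ⟨u, hu, heu⟩ := hsub ⟨h.le, hposi.le⟩
          exact hne u ⟨hu.1, hu.2.trans hs.2⟩ heu
        · exact h
      have key := aux_decay β ρ hβ0 hβ1 hρ e e' t ht0
        (fun s hs => hderiv s hs.1)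
        hallpos
        (by
          intro s hs
          have h1 := hineq s hs.1 (hne s hs)
          rw [Real.sign_of_pos (hallpos s hs), abs_of_pos (hallpos s hs)] at h1
          linarith)
      have habs : |e 0| = e 0 := abs_of_pos hposi
      have hp : (0:ℝ) < e t := hallpos t (Set.right_mem_Icc.mpr ht0)
      have hpt : (0:ℝ) < (e t) ^ (1 - β) := Real.rpow_pos_of_pos hp _
      rw [← habs] at key
      nlinarith
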